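/- arXiv:2602.14805 — 3 statements merged into one kernel-verified Lean document; each statement's English description precedes it below -/
import Mathlib

section
/- Let M ≥ 1 be an integer, L > 0, α_g ≥ 0, k_g ∈ ℝ, and set ϖ = (1/√2)·exp(−(α_g + i k_g)·L/(M+1)). Let Q(ϖ) denote the M × (M+1) complex matrix with entries [Q(ϖ)]_{m,n} = ϖ^{m−n+1} if 1 ≤ n ≤ m and [Q(ϖ)]_{m,n} = ϖ^{n−m} if m < n ≤ M+1, for m = 1,…,M and n = 1,…,M+1. Then Q(ϖ) has rank M, i.e., its transpose Q(ϖ)ᵀ has full column rank. -/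
open Matrix

theorem aux_rank (M : ℕ) (ϖ : ℂ) (h0 : ϖ ≠ 0) (h1 : ϖ ≠ 1)
    (Q : Matrix (Fin M) (Fin (M + 1)) ℂ)
    (hQ : ∀ (m : Fin M) (n : Fin (M + 1)), Q m n =
      if (n : ℕ) ≤ (m : ℕ) then ϖ ^ ((m : ℕ) - (n : ℕ) + 1) else ϖ ^ ((n : ℕ) - (m : ℕ))) :
    Q.rank = M := by
  have hker : ∀ c : Fin M → ℂ, Qᵀ.mulVecLin c = 0 → c = 0 := by
    intro c hc
    have hcol : ∀ n : Fin (M + 1), ∑ m : Fin M, Q m n * c m = 0 := by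
      intro n
      have := congrFun hc n
      simpa [Matrix.mulVecLin_apply, Matrix.mulVec, dotProduct,
        Matrix.transpose_apply, Matrix.vecMul, mul_comm] using this
    have main : ∀ n : ℕ, ∀ hn : n < M, c ⟨n, hn⟩ = 0 := by
      intro n
      induction n using Nat.strong_induction_on with
      | _ n IH =>
        intro hn
        set n₀ : Fin (M + 1) := ⟨n, by omega⟩ with hn₀
        set n₁ : Fin (M + 1) := ⟨n + 1, by omega⟩ with hn₁
        have hsum : ∑ m : Fin M, (Q m n₀ - ϖ * Q m n₁) * c m = 0 := by
          have e0 := hcol n₀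
          have e1 := hcol n₁
          calc ∑ m : Fin M, (Q m n₀ - ϖ * Q m n₁) * c m
              = (∑ m : Fin M, Q m n₀ * c m) - ϖ * ∑ m : Fin M, Q m n₁ * c m := by
                rw [Finset.mul_sum, ← Finset.sum_sub_distrib]
                congr 1; funext m; ring
            _ = 0 := by rw [e0, e1]; ring
        have hsingle : ∑ m : Fin M, (Q m n₀ - ϖ * Q m n₁) * c m
            = (ϖ - ϖ * ϖ) * c ⟨n, hn⟩ := by
          rw [Finset.sum_eq_single (⟨n, hn⟩ : Fin M)]
          · congr 1
            rw [hQ, hQ]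
            simp only [hn₀, hn₁]
            have hle : (n : ℕ) ≤ n := le_refl n
            rw [if_pos hle, if_neg (by omega)]
            have : n - n + 1 = 1 := by omega
            rw [this]
            have : n + 1 - n = 1 := by omega
            rw [this]
            ring
          · intro m _ hm
            rcases lt_or_gt_of_ne (fun h : (m : ℕ) = n => hm (Fin.ext h)) with hlt | hgt
            · have : c m = 0 := by
                have := IH m hlt m.isLt
                simpa using this
              rw [this, mul_zero]
            · have h1' : Q m n₀ = ϖ ^ ((m : ℕ) - n + 1) := by
                rw [hQ]; simp only [hn₀]
                rw [if_pos (by omega)]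
              have h2' : Q m n₁ = ϖ ^ ((m : ℕ) - n) := by
                rw [hQ]; simp only [hn₁]
                rw [if_pos (by omega)]
                congr 1; omega
              rw [h1', h2']
              have : (m : ℕ) - n + 1 = ((m : ℕ) - n) + 1 := rfl
              rw [this, pow_succ]
              ring_nf
          · intro h; exact absurd (Finset.mem_univ _) h
        rw [hsingle] at hsum
        have hne : ϖ - ϖ * ϖ ≠ 0 := by
          have : ϖ - ϖ * ϖ = ϖ * (1 - ϖ) := by ring
          rw [this]
          exact mul_ne_zero h0 (sub_ne_zero.mpr (Ne.symm h1))
        exact (mul_eq_zero.mp hsum).resolve_left hne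
    funext m
    have := main m.1 m.isLt
    simpa using this
  have hinj : Function.Injective Qᵀ.mulVecLin := by
    rw [← LinearMap.ker_eq_bot, LinearMap.ker_eq_bot']
    exact hker
  have hrkT : Qᵀ.rank = M := by
    rw [Matrix.rank, LinearMap.finrank_range_of_inj hinj]
    simp
  rw [← Matrix.rank_transpose, hrkT]

/-- the effective in-waveguide channel matrix of C-PASS under the
symmetric configuration has full rank M (equivalently, its transpose has full
column rank). -/
theorem stmt_1 (M : ℕ) (hM : 1 ≤ M) (L αg kg : ℝ) (hL : 0 < L) (hα : 0 ≤ αg)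
    (ϖ : ℂ)
    (hϖ : ϖ = ((1 / Real.sqrt 2 : ℝ) : ℂ) *
      Complex.exp (-((αg : ℂ) + (kg : ℂ) * Complex.I) * (L : ℂ) / ((M : ℂ) + 1)))
    (Q : Matrix (Fin M) (Fin (M + 1)) ℂ)
    (hQ : ∀ (m : Fin M) (n : Fin (M + 1)), Q m n =
      if (n : ℕ) ≤ (m : ℕ) then ϖ ^ ((m : ℕ) - (n : ℕ) + 1) else ϖ ^ ((n : ℕ) - (m : ℕ))) :
    Q.rank = M := by
  have hsqrt2 : (1 : ℝ) < Real.sqrt 2 := by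
    rw [show (1:ℝ) = Real.sqrt 1 from (Real.sqrt_one).symm]
    exact Real.sqrt_lt_sqrt (by norm_num) (by norm_num)
  have hz : -((αg : ℂ) + (kg : ℂ) * Complex.I) * (L : ℂ) / ((M : ℂ) + 1)
      = ((-(αg * L) / (M + 1) : ℝ) : ℂ) + ((-(kg * L) / (M + 1) : ℝ) : ℂ) * Complex.I := by
    have hM1 : ((M : ℂ) + 1) ≠ 0 := by
      have : ((M : ℂ) + 1) = ((M + 1 : ℕ) : ℂ) := by push_cast; ring
      rw [this]
      exact_mod_cast (Nat.cast_ne_zero (R := ℂ)).mpr (Nat.succ_ne_zero M)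
    push_cast
    ring
  have habs : ‖ϖ‖ < 1 := by
    rw [hϖ, norm_mul, hz, Complex.norm_exp]
    have hre : ∀ a b : ℝ, ((a : ℂ) + (b : ℂ) * Complex.I).re = a := by intro a b; simp
    rw [hre]
    have h1 : Real.exp (-(αg * L) / (M + 1)) ≤ 1 := by
      rw [Real.exp_le_one_iff]
      apply div_nonpos_of_nonpos_of_nonneg
      · nlinarith
      · positivity
    have h2 : ‖((1 / Real.sqrt 2 : ℝ) : ℂ)‖ = 1 / Real.sqrt 2 := by
      rw [Complex.norm_real, Real.norm_eq_abs, abs_of_pos]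
      positivity
    rw [h2]
    have h3 : 1 / Real.sqrt 2 < 1 := by
      rw [div_lt_one (by positivity)]; exact hsqrt2
    calc 1 / Real.sqrt 2 * Real.exp (-(αg * L) / (M + 1))
        ≤ 1 / Real.sqrt 2 * 1 := by
          apply mul_le_mul_of_nonneg_left h1; positivity
      _ < 1 := by rwa [mul_one]
  have h0 : ϖ ≠ 0 := by
    rw [hϖ]
    apply mul_ne_zero
    · exact_mod_cast (by positivity : (1 / Real.sqrt 2 : ℝ) ≠ 0)
    · exact Complex.exp_ne_zero _
  have h1 : ϖ ≠ 1 := by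
    intro h; rw [h] at habs; simp at habs
  exact aux_rank M ϖ h0 h1 Q hQ
end

section
/- Fix L ≥ 0 and α_g ≥ 0. For each integer M ≥ 1 set ϱ_M = (1/√2)·exp(−L·α_g/(M+1)) and Ā_R(M) = Σ_{m=1}^{M} ( Σ_{n=1}^{m} ϱ_M^{m−n+1} + Σ_{n=m+1}^{M+1} ϱ_M^{n−m} )². Then, with r = 1/√2, lim_{M → ∞} Ā_R(M)/M = 4·(r/(1−r))². In particular, Ā_R(M) = 4M·(ϱ_M/(1−ϱ_M))² + O(1) as M → ∞. -/
open Filter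

/-- Per-hop amplitude factor ϱ_M = (1/√2)·exp(−Lα_g/(M+1)). -/
noncomputable def varrho (L αg : ℝ) (M : ℕ) : ℝ :=
  (1 / Real.sqrt 2) * Real.exp (-(L * αg) / (M + 1))

/-- Normalized received-power sum Ā_R(M) of the C-PASS power scaling analysis. -/
noncomputable def AbarR (L αg : ℝ) (M : ℕ) : ℝ :=
  ∑ m ∈ Finset.Icc 1 M,
    ((∑ n ∈ Finset.Icc 1 m, varrho L αg M ^ (m - n + 1))
      + ∑ n ∈ Finset.Icc (m + 1) (M + 1), varrho L αg M ^ (n - m)) ^ 2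

lemma geom_Icc (r : ℝ) (hr : r ≠ 1) (j : ℕ) :
    ∑ k ∈ Finset.Icc 1 j, r ^ k = r * (1 - r ^ j) / (1 - r) := by
  have h1 : 1 - r ≠ 0 := sub_ne_zero.mpr (Ne.symm hr)
  induction j with
  | zero => simp
  | succ j ih =>
    rw [Finset.sum_Icc_succ_top (by omega), ih]
    field_simp
    ring

lemma sumA (r : ℝ) (m : ℕ) :
    ∑ n ∈ Finset.Icc 1 m, r ^ (m - n + 1) = ∑ k ∈ Finset.Icc 1 m, r ^ k := by
  refine Finset.sum_nbij' (fun n => m + 1 - n) (fun k => m + 1 - k) ?_ ?_ ?_ ?_ ?_ <;>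
    intro a ha <;> simp only [Finset.mem_Icc] at * <;> try omega
  have : m - a + 1 = m + 1 - a := by omega
  rw [this]

lemma sumB (r : ℝ) (m M : ℕ) (hm : m ≤ M) :
    ∑ n ∈ Finset.Icc (m + 1) (M + 1), r ^ (n - m)
      = ∑ k ∈ Finset.Icc 1 (M + 1 - m), r ^ k := by
  refine Finset.sum_nbij' (fun n => n - m) (fun k => k + m) ?_ ?_ ?_ ?_ ?_ <;>
    intro a ha <;> simp only [Finset.mem_Icc] at * <;> omega

lemma sqrt2_gt_one : (1 : ℝ) < Real.sqrt 2 := by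
  have : Real.sqrt 1 < Real.sqrt 2 := Real.sqrt_lt_sqrt (by norm_num) (by norm_num)
  simpa using this

lemma varrho_pos (L αg : ℝ) (M : ℕ) : 0 < varrho L αg M := by
  unfold varrho
  positivity

lemma varrho_le (L αg : ℝ) (hL : 0 ≤ L) (hα : 0 ≤ αg) (M : ℕ) :
    varrho L αg M ≤ 1 / Real.sqrt 2 := by
  unfold varrho
  have h1 : Real.exp (-(L * αg) / (M + 1)) ≤ 1 := by
    rw [Real.exp_le_one_iff]
    apply div_nonpos_of_nonpos_of_nonneg
    · simpa using mul_nonneg hL hα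
    · positivity
  have h2 : (0:ℝ) < 1 / Real.sqrt 2 := by positivity
  nlinarith

lemma varrho_lt_one (L αg : ℝ) (hL : 0 ≤ L) (hα : 0 ≤ αg) (M : ℕ) :
    varrho L αg M < 1 := by
  have := varrho_le L αg hL hα M
  have h2 : 1 / Real.sqrt 2 < 1 := by
    rw [div_lt_one (by positivity)]; exact sqrt2_gt_one
  linarith

lemma ratio_le {r : ℝ} (hr0 : 0 < r) (hr : r ≤ 1 / Real.sqrt 2) :
    r / (1 - r) ≤ Real.sqrt 2 + 1 := by
  have hs : (1:ℝ) < Real.sqrt 2 := sqrt2_gt_one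
  have hs2 : Real.sqrt 2 * Real.sqrt 2 = 2 := Real.mul_self_sqrt (by norm_num)
  have hr1 : r < 1 := lt_of_le_of_lt hr (by rw [div_lt_one (by positivity)]; exact hs)
  have h1r : 0 < 1 - r := by linarith
  rw [div_le_iff₀ h1r]
  have hrs : r * Real.sqrt 2 ≤ 1 := by
    rw [div_eq_mul_inv, ← Real.sqrt_inv] at hr
    nlinarith [Real.sq_sqrt (show (0:ℝ) ≤ 2⁻¹ by norm_num),
      Real.sqrt_nonneg (2:ℝ)⁻¹, mul_le_mul_of_nonneg_right hr (le_of_lt (lt_trans one_pos hs))]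
  nlinarith

lemma AbarR_eq (L αg : ℝ) (hL : 0 ≤ L) (hα : 0 ≤ αg) (M : ℕ) :
    AbarR L αg M = ∑ m ∈ Finset.Icc 1 M,
      ((varrho L αg M / (1 - varrho L αg M))
        * (2 - varrho L αg M ^ m - varrho L αg M ^ (M + 1 - m))) ^ 2 := by
  set r := varrho L αg M with hrdef
  have hrne : r ≠ 1 := ne_of_lt (varrho_lt_one L αg hL hα M)
  have h1r : (1:ℝ) - r ≠ 0 := sub_ne_zero.mpr (Ne.symm hrne)
  unfold AbarR
  refine Finset.sum_congr rfl fun m hm => ?_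
  simp only [Finset.mem_Icc] at hm
  rw [sumA, sumB r m M hm.2, geom_Icc r hrne m, geom_Icc r hrne (M + 1 - m)]
  congr 1
  field_simp
  ring

lemma key (L αg : ℝ) (hL : 0 ≤ L) (hα : 0 ≤ αg) (M : ℕ) (hM : 1 ≤ M) :
    |AbarR L αg M - 4 * M * (varrho L αg M / (1 - varrho L αg M)) ^ 2|
      ≤ 8 * (Real.sqrt 2 + 1) ^ 3 := by
  set r := varrho L αg M with hrdef
  have hr0 : 0 < r := varrho_pos L αg M
  have hr1 : r < 1 := varrho_lt_one L αg hL hα M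
  have h1r : (0:ℝ) < 1 - r := by linarith
  set c := r / (1 - r) with hcdef
  have hc0 : 0 ≤ c := div_nonneg hr0.le h1r.le
  have hcle : c ≤ Real.sqrt 2 + 1 := ratio_le hr0 (varrho_le L αg hL hα M)
  rw [AbarR_eq L αg hL hα M]
  have hcard : (Finset.Icc 1 M).card = M := by simp
  have hconst : 4 * (M:ℝ) * c ^ 2 = ∑ _m ∈ Finset.Icc 1 M, 4 * c ^ 2 := by
    rw [Finset.sum_const, hcard, nsmul_eq_mul]; ring
  rw [hconst, ← Finset.sum_sub_distrib]
  have hterm : ∀ m ∈ Finset.Icc 1 M,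
      |(c * (2 - r ^ m - r ^ (M + 1 - m))) ^ 2 - 4 * c ^ 2|
        ≤ 4 * c ^ 2 * (r ^ m + r ^ (M + 1 - m)) := by
    intro m hm
    set a := r ^ m with ha
    set b := r ^ (M + 1 - m) with hb
    have ha0 : 0 ≤ a := pow_nonneg hr0.le m
    have hb0 : 0 ≤ b := pow_nonneg hr0.le _
    have ha1 : a ≤ 1 := pow_le_one₀ hr0.le hr1.le
    have hb1 : b ≤ 1 := pow_le_one₀ hr0.le hr1.le
    rw [abs_le]
    constructor <;> nlinarith [sq_nonneg c, sq_nonneg (a + b), sq_nonneg (c * (a + b)),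
      mul_nonneg (sq_nonneg c) (mul_nonneg ha0 hb0)]
  calc |∑ m ∈ Finset.Icc 1 M, ((c * (2 - r ^ m - r ^ (M + 1 - m))) ^ 2 - 4 * c ^ 2)|
      ≤ ∑ m ∈ Finset.Icc 1 M, |(c * (2 - r ^ m - r ^ (M + 1 - m))) ^ 2 - 4 * c ^ 2| :=
        Finset.abs_sum_le_sum_abs _ _
    _ ≤ ∑ m ∈ Finset.Icc 1 M, 4 * c ^ 2 * (r ^ m + r ^ (M + 1 - m)) :=
        Finset.sum_le_sum hterm
    _ = 4 * c ^ 2 * ((∑ m ∈ Finset.Icc 1 M, r ^ m) + ∑ m ∈ Finset.Icc 1 M, r ^ (M + 1 - m)) := by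
        rw [← Finset.sum_add_distrib, Finset.mul_sum]
    _ ≤ 8 * (Real.sqrt 2 + 1) ^ 3 := by
        have hrev : ∑ m ∈ Finset.Icc 1 M, r ^ (M + 1 - m) = ∑ k ∈ Finset.Icc 1 M, r ^ k := by
          rw [← sumA r M]
          refine Finset.sum_congr rfl fun n hn => ?_
          simp only [Finset.mem_Icc] at hn
          congr 1
          omega
        have hgeom : ∑ k ∈ Finset.Icc 1 M, r ^ k ≤ c := by
          rw [geom_Icc r (ne_of_lt hr1) M, hcdef]
          gcongr
          nlinarith [pow_nonneg hr0.le M]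
        have hc3 : c ^ 3 ≤ (Real.sqrt 2 + 1) ^ 3 := pow_le_pow_left₀ hc0 hcle 3
        rw [hrev]
        nlinarith [sq_nonneg c, mul_nonneg hc0 hc0]

/-- with r = 1/√2, Ā_R(M)/M → 4(r/(1−r))² as M → ∞; in particular
Ā_R(M) = 4M·(ϱ_M/(1−ϱ_M))² + O(1). -/
theorem stmt_15 (L αg : ℝ) (hL : 0 ≤ L) (hα : 0 ≤ αg) :
    Tendsto (fun M : ℕ => AbarR L αg M / M) atTop
      (nhds (4 * ((1 / Real.sqrt 2) / (1 - 1 / Real.sqrt 2)) ^ 2)) ∧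
    ∃ C : ℝ, ∀ M : ℕ, 1 ≤ M →
      |AbarR L αg M - 4 * M * (varrho L αg M / (1 - varrho L αg M)) ^ 2| ≤ C := by
  constructor
  · -- the limit
    have hvarrho : Tendsto (fun M : ℕ => varrho L αg M) atTop (nhds (1 / Real.sqrt 2)) := by
      have h1 : Tendsto (fun M : ℕ => ((M : ℝ) + 1)) atTop atTop :=
        tendsto_atTop_add_const_right atTop 1 tendsto_natCast_atTop_atTop
      have h2 : Tendsto (fun M : ℕ => -(L * αg) / ((M : ℝ) + 1)) atTop (nhds 0) :=
        Tendsto.div_atTop tendsto_const_nhds h1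
      have h3 : Tendsto (fun M : ℕ => Real.exp (-(L * αg) / ((M : ℝ) + 1))) atTop
          (nhds 1) := by
        have := (Real.continuous_exp.tendsto 0).comp h2
        simpa [Function.comp_def] using this
      have := h3.const_mul (1 / Real.sqrt 2)
      simpa [varrho, mul_one] using this
    have hne : (1:ℝ) - 1 / Real.sqrt 2 ≠ 0 := by
      have : 1 / Real.sqrt 2 < 1 := by
        rw [div_lt_one (by positivity)]; exact sqrt2_gt_one
      linarith
    have hqlim : Tendsto (fun M : ℕ => (varrho L αg M / (1 - varrho L αg M)) ^ 2) atTop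
        (nhds (((1 / Real.sqrt 2) / (1 - 1 / Real.sqrt 2)) ^ 2)) :=
      ((hvarrho.div (tendsto_const_nhds.sub hvarrho) hne).pow 2)
    have herr : Tendsto (fun M : ℕ =>
        (AbarR L αg M - 4 * M * (varrho L αg M / (1 - varrho L αg M)) ^ 2) / M) atTop
        (nhds 0) := by
      refine squeeze_zero_norm' ?_
        (tendsto_const_div_atTop_nhds_zero_nat (8 * (Real.sqrt 2 + 1) ^ 3))
      filter_upwards [eventually_ge_atTop 1] with M hM
      have hM0 : (0:ℝ) < M := by exact_mod_cast hM
      rw [norm_div, Real.norm_natCast]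
      gcongr
      simpa [Real.norm_eq_abs] using key L αg hL hα M hM
    have hsum := herr.add (hqlim.const_mul 4)
    rw [zero_add] at hsum
    refine hsum.congr' ?_
    filter_upwards [eventually_ge_atTop 1] with M hM
    have hM0 : (M:ℝ) ≠ 0 := by positivity
    set s := (varrho L αg M / (1 - varrho L αg M)) ^ 2 with hsdef
    field_simp
    ring
  · exact ⟨8 * (Real.sqrt 2 + 1) ^ 3, fun M hM => key L αg hL hα M hM⟩
end

section
/- Let M ≥ 1 be an integer, L > 0, α_g ≥ 0, k_g ∈ ℝ. Suppose the power splitting ratios are β_m^F = β_m^B = 1/2 for all m = 1,…,M and the radiation ratios are δ_n = 1/2 for all n = 1,…,M+1, and the distance from input port m to pinching antenna n is d^{IN}_{m,n} = (L/(M+1))·|m − n + 1/2|. Define ξ^F_{m,n} = δ_n·Π_{j=m+1}^{n−1}(1 − δ_j) for n > m and ξ^B_{m,n} = δ_n·Π_{i=n+1}^{m}(1 − δ_i) for n ≤ m, and let Q be the M × (M+1) matrix with [Q]_{m,n} = sqrt(β_m^F ξ^F_{m,n})·exp(−(α_g + i k_g)·d^{IN}_{m,n}) if n > m and [Q]_{m,n}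 = sqrt(β_m^B ξ^B_{m,n})·exp(−(α_g + i k_g)·d^{IN}_{m,n}) if n ≤ m. Then, with ϖ = (1/√2)·exp(−(α_g + i k_g)·L/(M+1)), one has [Q]_{m,n} = (1/√2)·exp(L(α_g + i k_g)/(2(M+1)))·ϖ^{m−n+1} for n ≤ m and [Q]_{m,n} = (1/√2)·exp(L(α_g + i k_g)/(2(M+1)))·ϖ^{n−m} for n > m. -/
/-!
Every power splitting ratio and radiation ratio is `1/2`, so a signal from port `m` that passes
`k` antennas before radiating at antenna `n` is scaled in power by `(1/2)^(k+2)`, i.e. in amplitude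
by `(1/√2)^(k+2)`, while the path length is `(k + 1/2)` antenna spacings `L/(M+1)`. Splitting off
one amplitude factor `1/√2` and half a spacing of phase leaves exactly `ϖ^(k+1)`.
-/

open Finset Complex

lemma Real.sqrt_pow_of_nonneg {x : ℝ} (hx : 0 ≤ x) (n : ℕ) : √(x ^ n) = √x ^ n := by
  rw [← Real.sqrt_sq (pow_nonneg (Real.sqrt_nonneg x) n), ← pow_mul, mul_comm, pow_mul,
    Real.sq_sqrt hx]

lemma mul_exp_neg_mul_half_spacing (a c L N : ℂ) (k : ℕ) :
    a ^ (k + 2) * exp (-c * (L / N * (k + 1 / 2))) =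
      a * exp (L * c / (2 * N)) * (a * exp (-c * L / N)) ^ (k + 1) := by
  have hexp : exp (-c * (L / N * (k + 1 / 2))) =
      exp (L * c / (2 * N)) * exp (-c * L / N) ^ (k + 1) := by
    rw [← exp_nat_mul, ← exp_add]
    push_cast
    ring_nf
  rw [hexp, mul_pow]
  ring

/-- Port `m` sits at `m` and antenna `n` at `n - 1/2` antenna spacings, so this many antennas lie
strictly between them. -/
def antennasBetween (m n : ℕ) : ℕ := if n ≤ m then m - n else n - m - 1

lemma abs_sub_add_half_eq_antennasBetween (m n : ℕ) :
    |(m : ℝ) - n + 1 / 2| = antennasBetween m n + 1 / 2 := by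
  unfold antennasBetween
  split_ifs with h
  · have hcast : ((m - n : ℕ) : ℝ) = m - n := Nat.cast_sub h
    rw [hcast, abs_of_nonneg (by linarith [(Nat.cast_le (α := ℝ)).2 h])]
  · have hcast : ((n - m - 1 : ℕ) : ℝ) = n - m - 1 := by
      rw [Nat.sub_sub, Nat.cast_sub (by omega)]
      push_cast
      ring
    rw [hcast, abs_of_nonpos (by linarith [(Nat.cast_lt (α := ℝ)).2 (not_le.1 h)])]
    ring

lemma ite_pow_eq_pow_antennasBetween_succ {α : Type*} [Monoid α] (x : α) (m n : ℕ) :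
    (if n ≤ m then x ^ (m - n + 1) else x ^ (n - m)) = x ^ (antennasBetween m n + 1) := by
  unfold antennasBetween
  split_ifs with h
  · rfl
  · congr 1
    omega

theorem stmt_19_general (M : ℕ) (L αg kg : ℝ)
    (βF βB δ : ℕ → ℝ)
    (hβF : ∀ m, βF m = 1 / 2) (hβB : ∀ m, βB m = 1 / 2) (hδ : ∀ n, δ n = 1 / 2)
    (dIN : ℕ → ℕ → ℝ)
    (hdIN : ∀ m n, dIN m n = (L / (M + 1)) * |(m : ℝ) - (n : ℝ) + 1 / 2|)
    (ξF ξB : ℕ → ℕ → ℝ)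
    (hξF : ∀ m n, ξF m n = δ n * ∏ j ∈ Finset.Icc (m + 1) (n - 1), (1 - δ j))
    (hξB : ∀ m n, ξB m n = δ n * ∏ i ∈ Finset.Icc (n + 1) m, (1 - δ i))
    (Q : ℕ → ℕ → ℂ)
    (hQ : ∀ m ∈ Finset.Icc 1 M, ∀ n ∈ Finset.Icc 1 (M + 1),
      Q m n = if m < n
        then ((Real.sqrt (βF m * ξF m n) : ℝ) : ℂ) *
          Complex.exp (-((αg : ℂ) + (kg : ℂ) * Complex.I) * ((dIN m n : ℝ) : ℂ))
        else ((Real.sqrt (βB m * ξB m n) : ℝ) : ℂ) *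
          Complex.exp (-((αg : ℂ) + (kg : ℂ) * Complex.I) * ((dIN m n : ℝ) : ℂ)))
    (ϖ : ℂ)
    (hϖ : ϖ = ((1 / Real.sqrt 2 : ℝ) : ℂ) *
      Complex.exp (-((αg : ℂ) + (kg : ℂ) * Complex.I) * (L : ℂ) / ((M : ℂ) + 1))) :
    ∀ m ∈ Finset.Icc 1 M, ∀ n ∈ Finset.Icc 1 (M + 1),
      Q m n = ((1 / Real.sqrt 2 : ℝ) : ℂ) *
        Complex.exp ((L : ℂ) * ((αg : ℂ) + (kg : ℂ) * Complex.I) / (2 * ((M : ℂ) + 1))) *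
        (if n ≤ m then ϖ ^ (m - n + 1) else ϖ ^ (n - m)) := by
  intro m hm n hn
  have hpower : (if m < n then βF m * ξF m n else βB m * ξB m n) =
      (1 / 2) ^ (antennasBetween m n + 2) := by
    simp only [hβF, hβB, hξF, hξB, hδ, prod_const, Nat.card_Icc, antennasBetween]
    split_ifs with hlt hle hle
    · omega
    · rw [show n - 1 + 1 - (m + 1) = n - m - 1 by omega]
      ring
    · rw [show m + 1 - (n + 1) = m - n by omega]
      ring
    · omega
  have hamplitude : √(1 / 2 : ℝ) = 1 / √2 := by
    rw [one_div, Real.sqrt_inv, one_div]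
  have hQmn : Q m n = ((√(if m < n then βF m * ξF m n else βB m * ξB m n) : ℝ) : ℂ) *
      exp (-((αg : ℂ) + (kg : ℂ) * I) * ((dIN m n : ℝ) : ℂ)) := by
    rw [hQ m hm n hn]
    split_ifs <;> rfl
  rw [hQmn, hpower, Real.sqrt_pow_of_nonneg (by norm_num), hamplitude, hdIN,
    abs_sub_add_half_eq_antennasBetween, ite_pow_eq_pow_antennasBetween_succ, hϖ]
  push_cast
  exact mul_exp_neg_mul_half_spacing _ _ _ _ _

/-- under the symmetric configuration (β_m^F = β_m^B = 1/2, δ_n = 1/2)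
with uniform port/antenna placement d^{IN}_{m,n} = (L/(M+1))·|m − n + 1/2|, the
effective in-waveguide channel entries of C-PASS equal the common scalar
(1/√2)·exp(L(α_g + i k_g)/(2(M+1))) times ϖ^{m−n+1} (n ≤ m) or ϖ^{n−m} (n > m),
where ϖ = (1/√2)·exp(−(α_g + i k_g)L/(M+1)). -/
theorem stmt_19 (M : ℕ) (hM : 1 ≤ M) (L αg kg : ℝ) (hL : 0 < L) (hα : 0 ≤ αg)
    (βF βB δ : ℕ → ℝ)
    (hβF : ∀ m, βF m = 1 / 2) (hβB : ∀ m, βB m = 1 / 2) (hδ : ∀ n, δ n = 1 / 2)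
    (dIN : ℕ → ℕ → ℝ)
    (hdIN : ∀ m n, dIN m n = (L / (M + 1)) * |(m : ℝ) - (n : ℝ) + 1 / 2|)
    (ξF ξB : ℕ → ℕ → ℝ)
    (hξF : ∀ m n, ξF m n = δ n * ∏ j ∈ Finset.Icc (m + 1) (n - 1), (1 - δ j))
    (hξB : ∀ m n, ξB m n = δ n * ∏ i ∈ Finset.Icc (n + 1) m, (1 - δ i))
    (Q : ℕ → ℕ → ℂ)
    (hQ : ∀ m ∈ Finset.Icc 1 M, ∀ n ∈ Finset.Icc 1 (M + 1),
      Q m n = if m < n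
        then ((Real.sqrt (βF m * ξF m n) : ℝ) : ℂ) *
          Complex.exp (-((αg : ℂ) + (kg : ℂ) * Complex.I) * ((dIN m n : ℝ) : ℂ))
        else ((Real.sqrt (βB m * ξB m n) : ℝ) : ℂ) *
          Complex.exp (-((αg : ℂ) + (kg : ℂ) * Complex.I) * ((dIN m n : ℝ) : ℂ)))
    (ϖ : ℂ)
    (hϖ : ϖ = ((1 / Real.sqrt 2 : ℝ) : ℂ) *
      Complex.exp (-((αg : ℂ) + (kg : ℂ) * Complex.I) * (L : ℂ) / ((M : ℂ) + 1))) :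
    ∀ m ∈ Finset.Icc 1 M, ∀ n ∈ Finset.Icc 1 (M + 1),
      Q m n = ((1 / Real.sqrt 2 : ℝ) : ℂ) *
        Complex.exp ((L : ℂ) * ((αg : ℂ) + (kg : ℂ) * Complex.I) / (2 * ((M : ℂ) + 1))) *
        (if n ≤ m then ϖ ^ (m - n + 1) else ϖ ^ (n - m)) :=
  stmt_19_general M L αg kg βF βB δ hβF hβB hδ dIN hdIN ξF ξB hξF hξB Q hQ ϖ hϖ
end
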